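/- arXiv:2103.10289 — 6 statements merged into one kernel-verified Lean document; each statement's English description precedes it below -/
import Mathlib

section
/- Let (X,‖·‖) be a Banach space and let T : X → X be an enriched (b,θ,L)-almost contraction, i.e. there exist b ∈ [0,∞), θ ∈ (0,b+1) and L ≥ 0 such that ‖b(x−y) + Tx − Ty‖ ≤ θ‖x−y‖ + L‖b(x−y) + Tx − y‖ for all x,y ∈ X. Then: (1) the set of fixed points of T is nonempty; (2) there exists λ ∈ (0,1] such that for every x₀ ∈ X the Krasnoselskij iteration xₙ₊₁ = (1−λ)xₙ + λTxₙ converges to some fixed point x* of T; (3) with δ = θ/(b+1), the estimates ‖xₙ − x*‖ ≤ δⁿ/(1−δ)·‖x₀ − x₁‖ for n ≥ 0 and ‖xₙ − x*‖ ≤ δ/(1−δ)·‖xₙ₋₁ − xₙ‖ for n ≥ 1 hold. -/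
/-!
Averaging with weight `λ = 1/(b+1)` turns the enriched condition into Berinde's almost
contraction condition `‖g x − g y‖ ≤ δ‖x − y‖ + L‖g x − y‖` for the Krasnoselskij map
`g = (1−λ)·id + λT`, with `δ = θ/(b+1) < 1`. Taking `y = g x` shows that consecutive Picard
steps of `g` shrink geometrically, so the orbit is Cauchy and converges; applying the condition at
`(gⁿx, x*)` shows that `gⁿ⁺¹x` also tends to `g x*`, so the limit is a fixed point of `g`, hence
of `T`. Both error estimates are the usual tail bounds of a geometric series.
-/

open Filter Topology

def IsAlmostContraction {α : Type*} [PseudoMetricSpace α] (g : α → α) (δ L : ℝ) : Prop :=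
  ∀ x y, dist (g x) (g y) ≤ δ * dist x y + L * dist (g x) y

namespace IsAlmostContraction

section PseudoMetric

variable {α : Type*} [PseudoMetricSpace α] {g : α → α} {δ L : ℝ}

theorem dist_map_map_le (hg : IsAlmostContraction g δ L) (x : α) :
    dist (g x) (g (g x)) ≤ δ * dist x (g x) := by
  simpa using hg x (g x)

theorem dist_iterate_succ_le_geometric (hg : IsAlmostContraction g δ L) (hδ : 0 ≤ δ)
    (x : α) (n : ℕ) : dist (g^[n] x) (g^[n + 1] x) ≤ dist x (g x) * δ ^ n := by
  induction n with
  | zero => simp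
  | succ n ih =>
    simp only [Function.iterate_succ_apply'] at ih ⊢
    calc dist (g (g^[n] x)) (g (g (g^[n] x))) ≤ δ * dist (g^[n] x) (g (g^[n] x)) :=
          hg.dist_map_map_le _
      _ ≤ δ * (dist x (g x) * δ ^ n) := by gcongr
      _ = dist x (g x) * δ ^ (n + 1) := by ring

theorem apriori_dist_iterate_le (hg : IsAlmostContraction g δ L) (hδ₀ : 0 ≤ δ) (hδ₁ : δ < 1)
    {x y : α} (h : Tendsto (fun n ↦ g^[n] x) atTop (𝓝 y)) (n : ℕ) :
    dist (g^[n] x) y ≤ δ ^ n / (1 - δ) * dist x (g x) := by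
  have := dist_le_of_le_geometric_of_tendsto δ _ hδ₁
    (hg.dist_iterate_succ_le_geometric hδ₀ x) h n
  rwa [mul_div_assoc, mul_comm] at this

theorem aposteriori_dist_iterate_succ_le (hg : IsAlmostContraction g δ L) (hδ₀ : 0 ≤ δ)
    (hδ₁ : δ < 1) {x y : α} (h : Tendsto (fun n ↦ g^[n] x) atTop (𝓝 y)) (n : ℕ) :
    dist (g^[n + 1] x) y ≤ δ / (1 - δ) * dist (g^[n] x) (g^[n + 1] x) := by
  have h' : Tendsto (fun k ↦ g^[k] (g^[n] x)) atTop (𝓝 y) := by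
    simpa only [Function.iterate_add_apply] using (tendsto_add_atTop_iff_nat n).2 h
  simpa only [pow_one, ← Function.iterate_succ_apply', Function.iterate_one]
    using hg.apriori_dist_iterate_le hδ₀ hδ₁ h' 1

end PseudoMetric

section Metric

variable {α : Type*} [MetricSpace α] {g : α → α} {δ L : ℝ}

theorem map_eq_of_tendsto_iterate (hg : IsAlmostContraction g δ L) {x y : α}
    (h : Tendsto (fun n ↦ g^[n] x) atTop (𝓝 y)) : g y = y := by
  have h₁ : Tendsto (fun n ↦ g (g^[n] x)) atTop (𝓝 y) := by
    simpa only [Function.iterate_succ_apply'] using (tendsto_add_atTop_iff_nat 1).2 h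
  have h₂ : Tendsto (fun n ↦ g (g^[n] x)) atTop (𝓝 (g y)) := by
    rw [tendsto_iff_dist_tendsto_zero] at h h₁ ⊢
    refine squeeze_zero (fun _ ↦ dist_nonneg) (fun n ↦ hg _ _) ?_
    simpa only [mul_zero, add_zero] using (h.const_mul δ).add (h₁.const_mul L)
  exact tendsto_nhds_unique h₂ h₁

theorem exists_fixedPoint_tendsto_iterate [CompleteSpace α] (hg : IsAlmostContraction g δ L)
    (hδ₀ : 0 ≤ δ) (hδ₁ : δ < 1) (x : α) :
    ∃ y, g y = y ∧ Tendsto (fun n ↦ g^[n] x) atTop (𝓝 y) := by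
  obtain ⟨y, hy⟩ := cauchySeq_tendsto_of_complete
    (cauchySeq_of_le_geometric δ _ hδ₁ (hg.dist_iterate_succ_le_geometric hδ₀ x))
  exact ⟨y, hg.map_eq_of_tendsto_iterate hy, hy⟩

end Metric

end IsAlmostContraction

section Krasnoselskij

variable {X : Type*} [NormedAddCommGroup X] [NormedSpace ℝ X]

def krasnoselskij (T : X → X) (lam : ℝ) (z : X) : X := (1 - lam) • z + lam • T z

theorem krasnoselskij_eq_self_iff {T : X → X} {lam : ℝ} (hlam : lam ≠ 0) {x : X} :
    krasnoselskij T lam x = x ↔ T x = x := by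
  rw [krasnoselskij, sub_smul, one_smul, sub_add_eq_add_sub, add_sub_assoc, add_eq_left,
    ← smul_sub, smul_eq_zero, sub_eq_zero, or_iff_right hlam]

theorem krasnoselskij_inv_sub (T : X → X) {b : ℝ} (hb : b + 1 ≠ 0) (x y : X) :
    krasnoselskij T (b + 1)⁻¹ x - y = (b + 1)⁻¹ • (b • (x - y) + T x - y) := by
  unfold krasnoselskij
  match_scalars <;> field_simp <;> ring

theorem isAlmostContraction_krasnoselskij {T : X → X} {b θ L : ℝ} (hb : 0 < b + 1)
    (hT : ∀ x y : X,
      ‖b • (x - y) + T x - T y‖ ≤ θ * ‖x - y‖ + L * ‖b • (x - y) + T x - y‖) :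
    IsAlmostContraction (krasnoselskij T (b + 1)⁻¹) (θ / (b + 1)) L := by
  intro x y
  have hsub : krasnoselskij T (b + 1)⁻¹ x - krasnoselskij T (b + 1)⁻¹ y =
      (b + 1)⁻¹ • (b • (x - y) + T x - T y) := by
    unfold krasnoselskij
    match_scalars <;> field_simp <;> ring
  rw [dist_eq_norm, dist_eq_norm, dist_eq_norm, hsub, krasnoselskij_inv_sub T hb.ne',
    norm_smul, norm_smul, Real.norm_of_nonneg (inv_nonneg.2 hb.le)]
  calc (b + 1)⁻¹ * ‖b • (x - y) + T x - T y‖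
      ≤ (b + 1)⁻¹ * (θ * ‖x - y‖ + L * ‖b • (x - y) + T x - y‖) := by gcongr; exact hT x y
    _ = _ := by ring

end Krasnoselskij

theorem enriched_almost_contraction_fixed_point_general
    {X : Type*} [NormedAddCommGroup X] [NormedSpace ℝ X] [CompleteSpace X]
    (T : X → X) (b θ L : ℝ) (hb : 0 ≤ b) (hθ : θ ∈ Set.Ioo 0 (b + 1))
    (hT : ∀ x y : X,
      ‖b • (x - y) + T x - T y‖ ≤ θ * ‖x - y‖ + L * ‖b • (x - y) + T x - y‖) :
    (∃ x : X, T x = x) ∧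
    ∃ lam ∈ Set.Ioc (0 : ℝ) 1,
      ∀ x₀ : X, ∃ xs : X, T xs = xs ∧
        Filter.Tendsto (fun n => (fun z => (1 - lam) • z + lam • T z)^[n] x₀)
          Filter.atTop (nhds xs) ∧
        (∀ n : ℕ, ‖(fun z => (1 - lam) • z + lam • T z)^[n] x₀ - xs‖ ≤
          (θ / (b + 1)) ^ n / (1 - θ / (b + 1)) *
            ‖x₀ - ((1 - lam) • x₀ + lam • T x₀)‖) ∧
        (∀ n : ℕ, 1 ≤ n →
          ‖(fun z => (1 - lam) • z + lam • T z)^[n] x₀ - xs‖ ≤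
            (θ / (b + 1)) / (1 - θ / (b + 1)) *
              ‖(fun z => (1 - lam) • z + lam • T z)^[n - 1] x₀ -
                (fun z => (1 - lam) • z + lam • T z)^[n] x₀‖) := by
  obtain ⟨hθ₀, hθb⟩ := hθ
  have hb₁ : 0 < b + 1 := by linarith
  have hδ₀ : 0 ≤ θ / (b + 1) := by positivity
  have hδ₁ : θ / (b + 1) < 1 := (div_lt_one hb₁).2 hθb
  have hg := isAlmostContraction_krasnoselskij hb₁ hT
  have hfix {x : X} : krasnoselskij T (b + 1)⁻¹ x = x ↔ T x = x :=
    krasnoselskij_eq_self_iff (inv_ne_zero hb₁.ne')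
  refine ⟨?_, (b + 1)⁻¹, ⟨by positivity, inv_le_one_of_one_le₀ (by linarith)⟩, fun x₀ ↦ ?_⟩
  · obtain ⟨xs, hxs, -⟩ := hg.exists_fixedPoint_tendsto_iterate hδ₀ hδ₁ 0
    exact ⟨xs, hfix.1 hxs⟩
  obtain ⟨xs, hxs, hlim⟩ := hg.exists_fixedPoint_tendsto_iterate hδ₀ hδ₁ x₀
  refine ⟨xs, hfix.1 hxs, hlim, fun n ↦ ?_, fun n hn ↦ ?_⟩
  · rw [← dist_eq_norm, ← dist_eq_norm]
    exact hg.apriori_dist_iterate_le hδ₀ hδ₁ hlim n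
  · obtain ⟨m, rfl⟩ := Nat.exists_eq_add_of_le' hn
    rw [Nat.add_sub_cancel, ← dist_eq_norm, ← dist_eq_norm]
    exact hg.aposteriori_dist_iterate_succ_le hδ₀ hδ₁ hlim m

/-- **Theorem.** Let `X` be a Banach space and `T : X → X` an enriched
`(b,θ,L)`-almost contraction: `b ≥ 0`, `θ ∈ (0,b+1)`, `L ≥ 0` and
`‖b(x−y) + Tx − Ty‖ ≤ θ‖x−y‖ + L‖b(x−y) + Tx − y‖` for all `x,y`. Then the
fixed point set of `T` is nonempty and there exists `λ ∈ (0,1]` such that for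
every `x₀` the Krasnoselskij iteration `xₙ₊₁ = (1−λ)xₙ + λTxₙ` converges to
some fixed point `x*` of `T`, with the a priori and a posteriori estimates for
`δ = θ/(b+1)`. -/
theorem enriched_almost_contraction_fixed_point
    {X : Type*} [NormedAddCommGroup X] [NormedSpace ℝ X] [CompleteSpace X]
    (T : X → X) (b θ L : ℝ) (hb : 0 ≤ b) (hθ : θ ∈ Set.Ioo 0 (b + 1)) (hL : 0 ≤ L)
    (hT : ∀ x y : X,
      ‖b • (x - y) + T x - T y‖ ≤ θ * ‖x - y‖ + L * ‖b • (x - y) + T x - y‖) :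
    (∃ x : X, T x = x) ∧
    ∃ lam ∈ Set.Ioc (0 : ℝ) 1,
      ∀ x₀ : X, ∃ xs : X, T xs = xs ∧
        Filter.Tendsto (fun n => (fun z => (1 - lam) • z + lam • T z)^[n] x₀)
          Filter.atTop (nhds xs) ∧
        (∀ n : ℕ, ‖(fun z => (1 - lam) • z + lam • T z)^[n] x₀ - xs‖ ≤
          (θ / (b + 1)) ^ n / (1 - θ / (b + 1)) *
            ‖x₀ - ((1 - lam) • x₀ + lam • T x₀)‖) ∧
        (∀ n : ℕ, 1 ≤ n →
          ‖(fun z => (1 - lam) • z + lam • T z)^[n] x₀ - xs‖ ≤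
            (θ / (b + 1)) / (1 - θ / (b + 1)) *
              ‖(fun z => (1 - lam) • z + lam • T z)^[n - 1] x₀ -
                (fun z => (1 - lam) • z + lam • T z)^[n] x₀‖) :=
  enriched_almost_contraction_fixed_point_general T b θ L hb hθ hT
end

section
/- Let X be a normed space, T : X → X, b ∈ (0,∞), θ ∈ (0,b+1) and L ≥ 0 such that ‖b(x−y) + Tx − Ty‖ ≤ θ‖x−y‖ + L‖b(x−y) + Tx − y‖ for all x,y ∈ X. Set λ = 1/(b+1) and define the averaged operator T_λ x = (1−λ)x + λTx. Then, with δ = θ/(b+1) ∈ (0,1), the operator T_λ satisfies ‖T_λx − T_λy‖ ≤ δ‖x−y‖ + L‖T_λx − y‖ for all x,y ∈ X; that is, T_λ is a (δ,L)-almost contraction on X. -/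
/-!
With `λ = 1/(b+1)` one has `1 - λ = bλ`, so both `T_λx − T_λy` and `T_λx − y` are `λ` times the
vectors `b(x−y) + Tx − Ty` and `b(x−y) + Tx − y` of the hypothesis; multiplying the hypothesis by
`λ` gives the claim with `δ = λθ`.
-/

section Averaged

variable {X : Type*} [NormedAddCommGroup X] [NormedSpace ℝ X]

theorem averaged_sub_averaged {b : ℝ} (hb : b + 1 ≠ 0) (x y u v : X) :
    ((1 - 1 / (b + 1)) • x + (1 / (b + 1)) • u) - ((1 - 1 / (b + 1)) • y + (1 / (b + 1)) • v) =
      (1 / (b + 1)) • (b • (x - y) + u - v) := by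
  match_scalars <;> field_simp <;> ring

theorem averaged_sub_right {b : ℝ} (hb : b + 1 ≠ 0) (x y u : X) :
    ((1 - 1 / (b + 1)) • x + (1 / (b + 1)) • u) - y = (1 / (b + 1)) • (b • (x - y) + u - y) := by
  simpa [← add_smul] using averaged_sub_averaged hb x y u y

end Averaged

theorem averaged_operator_is_almost_contraction_general
    {X : Type*} [NormedAddCommGroup X] [NormedSpace ℝ X]
    (T : X → X) (b θ L : ℝ) (hθ : θ ∈ Set.Ioo 0 (b + 1))
    (hT : ∀ x y : X,
      ‖b • (x - y) + T x - T y‖ ≤ θ * ‖x - y‖ + L * ‖b • (x - y) + T x - y‖) :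
    θ / (b + 1) ∈ Set.Ioo (0 : ℝ) 1 ∧
    ∀ x y : X,
      ‖((1 - 1 / (b + 1)) • x + (1 / (b + 1)) • T x) -
          ((1 - 1 / (b + 1)) • y + (1 / (b + 1)) • T y)‖ ≤
        (θ / (b + 1)) * ‖x - y‖ +
          L * ‖((1 - 1 / (b + 1)) • x + (1 / (b + 1)) • T x) - y‖ := by
  obtain ⟨hθ_pos, hθ_lt⟩ := hθ
  have hb₁ : 0 < b + 1 := hθ_pos.trans hθ_lt
  refine ⟨⟨div_pos hθ_pos hb₁, (div_lt_one hb₁).2 hθ_lt⟩, fun x y => ?_⟩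
  rw [averaged_sub_averaged hb₁.ne', averaged_sub_right hb₁.ne', norm_smul, norm_smul,
    Real.norm_of_nonneg (by positivity)]
  calc 1 / (b + 1) * ‖b • (x - y) + T x - T y‖
      ≤ 1 / (b + 1) * (θ * ‖x - y‖ + L * ‖b • (x - y) + T x - y‖) := by gcongr; exact hT x y
    _ = θ / (b + 1) * ‖x - y‖ + L * (1 / (b + 1) * ‖b • (x - y) + T x - y‖) := by ring

/-- **Lemma (key step in the proof of the main theorem).** If `T : X → X` on a
normed space satisfies the enriched `(b,θ,L)`-almost contraction condition with
`b > 0`, `θ ∈ (0,b+1)`, `L ≥ 0`, then with `λ = 1/(b+1)` the averaged operator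
`T_λ x = (1−λ)x + λTx` is a `(δ,L)`-almost contraction with `δ = θ/(b+1) ∈ (0,1)`:
`‖T_λx − T_λy‖ ≤ δ‖x−y‖ + L‖T_λx − y‖` for all `x,y`. -/
theorem averaged_operator_is_almost_contraction
    {X : Type*} [NormedAddCommGroup X] [NormedSpace ℝ X]
    (T : X → X) (b θ L : ℝ) (hb : 0 < b) (hθ : θ ∈ Set.Ioo 0 (b + 1)) (hL : 0 ≤ L)
    (hT : ∀ x y : X,
      ‖b • (x - y) + T x - T y‖ ≤ θ * ‖x - y‖ + L * ‖b • (x - y) + T x - y‖) :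
    θ / (b + 1) ∈ Set.Ioo (0 : ℝ) 1 ∧
    ∀ x y : X,
      ‖((1 - 1 / (b + 1)) • x + (1 / (b + 1)) • T x) -
          ((1 - 1 / (b + 1)) • y + (1 / (b + 1)) • T y)‖ ≤
        (θ / (b + 1)) * ‖x - y‖ +
          L * ‖((1 - 1 / (b + 1)) • x + (1 / (b + 1)) • T x) - y‖ :=
  averaged_operator_is_almost_contraction_general T b θ L hθ hT
end

section
/- Let (X,‖·‖) be a Banach space and T : X → X a (k,a)-enriched Kannan mapping, i.e. there exist a ∈ [0,1/2) and k ∈ [0,∞) such that ‖k(x−y) + Tx − Ty‖ ≤ a(‖x − Tx‖ + ‖y − Ty‖) for all x,y ∈ X. Then: (1) T has a unique fixed point p; (2) there exists λ ∈ (0,1] such that the Krasnoselskij iteration xₙ₊₁ = (1−λ)xₙ + λTxₙ converges to p for every x₀ ∈ X; (3) with δ = a/(1−a), the estimate ‖xₙ − p‖ ≤ δⁿ/(1−δ)·‖x₀ − x₁‖ holds for all n ≥ 0. -/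
/-!
Write `K = (1 - λ) • id + λ • T` for `λ = 1 / (k + 1)`. Then `x - K x = λ • (x - T x)` and
`K x - K y = λ • (k • (x - y) + T x - T y)`, so the enriched Kannan condition on `T` says
exactly that `K` is a Kannan mapping with the same constant `a`, and `K` has the same fixed
points as `T`. For a Kannan mapping `f`, applying the condition to `x` and `f x` gives
`dist (f x) (f² x) ≤ δ * dist x (f x)` with `δ = a / (1 - a) < 1`, so every orbit is Cauchy with
geometric rate; its limit is a fixed point, which is unique since the condition at two fixed
points bounds their distance by `0`.
-/

open Filter Function Topology

def IsKannanMap {α : Type*} [MetricSpace α] (a : ℝ) (f : α → α) : Prop :=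
  ∀ x y, dist (f x) (f y) ≤ a * (dist x (f x) + dist y (f y))

namespace IsKannanMap

variable {α : Type*} [MetricSpace α] {a : ℝ} {f : α → α}

theorem eq_of_isFixedPt (hf : IsKannanMap a f) {p q : α} (hp : IsFixedPt f p)
    (hq : IsFixedPt f q) : p = q := by
  have h := hf p q
  rw [hp, hq, dist_self, dist_self, add_zero, mul_zero] at h
  exact dist_le_zero.mp h

theorem dist_map_map_le (hf : IsKannanMap a f) (ha : a < 1) (x : α) :
    dist (f x) (f (f x)) ≤ a / (1 - a) * dist x (f x) := by
  have h := hf x (f x)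
  rw [div_mul_eq_mul_div, le_div_iff₀ (by linarith)]
  linarith

theorem dist_iterate_succ_le (hf : IsKannanMap a f) (ha₀ : 0 ≤ a) (ha : a < 1) (x : α)
    (n : ℕ) : dist (f^[n] x) (f^[n + 1] x) ≤ dist x (f x) * (a / (1 - a)) ^ n := by
  induction n with
  | zero => simp
  | succ n ih =>
    have hδ : 0 ≤ a / (1 - a) := div_nonneg ha₀ (by linarith)
    calc dist (f^[n + 1] x) (f^[n + 2] x)
        = dist (f (f^[n] x)) (f (f (f^[n] x))) := by
          rw [iterate_succ_apply', iterate_succ_apply', iterate_succ_apply']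
      _ ≤ a / (1 - a) * dist (f^[n] x) (f^[n + 1] x) := by
          rw [iterate_succ_apply']; exact hf.dist_map_map_le ha _
      _ ≤ a / (1 - a) * (dist x (f x) * (a / (1 - a)) ^ n) := by gcongr
      _ = dist x (f x) * (a / (1 - a)) ^ (n + 1) := by ring

/-- Passing to the limit in `dist (f^[n+1] x) (f p) ≤ a * (dist (f^[n] x) (f^[n+1] x) + dist p (f p))`
gives `dist p (f p) ≤ a * dist p (f p)`. -/
theorem isFixedPt_of_tendsto_iterate (hf : IsKannanMap a f) (ha : a < 1) {x p : α}
    (hp : Tendsto (fun n => f^[n] x) atTop (𝓝 p)) : IsFixedPt f p := by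
  have hp' : Tendsto (fun n => f^[n + 1] x) atTop (𝓝 p) := hp.comp (tendsto_add_atTop_nat 1)
  have hlhs : Tendsto (fun n => dist (f^[n + 1] x) (f p)) atTop (𝓝 (dist p (f p))) :=
    hp'.dist tendsto_const_nhds
  have hrhs : Tendsto (fun n => a * (dist (f^[n] x) (f^[n + 1] x) + dist p (f p))) atTop
      (𝓝 (a * (dist p p + dist p (f p)))) :=
    ((hp.dist hp').add tendsto_const_nhds).const_mul a
  have hle : dist p (f p) ≤ a * (dist p p + dist p (f p)) :=
    le_of_tendsto_of_tendsto' hlhs hrhs fun n => by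
      rw [iterate_succ_apply']; exact hf _ _
  rw [dist_self, zero_add] at hle
  have : dist p (f p) ≤ 0 := by nlinarith [dist_nonneg (x := p) (y := f p)]
  exact (dist_le_zero.mp this).symm

theorem exists_isFixedPt_tendsto_iterate [CompleteSpace α] [Nonempty α] (hf : IsKannanMap a f)
    (ha₀ : 0 ≤ a) (ha : a < 1 / 2) :
    ∃ p, IsFixedPt f p ∧ ∀ x, Tendsto (fun n => f^[n] x) atTop (𝓝 p) ∧
      ∀ n : ℕ, dist (f^[n] x) p ≤ (a / (1 - a)) ^ n / (1 - a / (1 - a)) * dist x (f x) := by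
  have hδ : a / (1 - a) < 1 := by rw [div_lt_one (by linarith)]; linarith
  have hgeom (x : α) := hf.dist_iterate_succ_le ha₀ (by linarith) x
  have horbit (x : α) : ∃ p, Tendsto (fun n => f^[n] x) atTop (𝓝 p) :=
    cauchySeq_tendsto_of_complete (cauchySeq_of_le_geometric _ _ hδ (hgeom x))
  obtain ⟨p, hp⟩ := horbit (Classical.arbitrary α)
  have hpfix : IsFixedPt f p := hf.isFixedPt_of_tendsto_iterate (by linarith) hp
  refine ⟨p, hpfix, fun x => ?_⟩
  obtain ⟨q, hq⟩ := horbit x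
  obtain rfl : q = p := hf.eq_of_isFixedPt (hf.isFixedPt_of_tendsto_iterate (by linarith) hq) hpfix
  refine ⟨hq, fun n => ?_⟩
  rw [div_mul_eq_mul_div, mul_comm]
  exact dist_le_of_le_geometric_of_tendsto _ _ hδ (hgeom x) hq n

end IsKannanMap

section Enriched

variable {X : Type*}

def krasnoselskijMap [AddCommGroup X] [Module ℝ X] (lam : ℝ) (T : X → X) (z : X) : X :=
  (1 - lam) • z + lam • T z

def IsEnrichedKannanMap [NormedAddCommGroup X] [NormedSpace ℝ X] (k a : ℝ) (T : X → X) : Prop :=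
  ∀ x y : X, ‖k • (x - y) + T x - T y‖ ≤ a * (‖x - T x‖ + ‖y - T y‖)

section Module

variable [AddCommGroup X] [Module ℝ X] {lam : ℝ} {T : X → X}

theorem sub_krasnoselskijMap (x : X) : x - krasnoselskijMap lam T x = lam • (x - T x) := by
  simp only [krasnoselskijMap, smul_sub, sub_smul, one_smul]
  abel

theorem krasnoselskijMap_sub_krasnoselskijMap {k : ℝ} (hlam : lam * k = 1 - lam) (x y : X) :
    krasnoselskijMap lam T x - krasnoselskijMap lam T y = lam • (k • (x - y) + T x - T y) := by
  simp only [krasnoselskijMap, smul_add, smul_sub, smul_smul, hlam]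
  abel

theorem isFixedPt_krasnoselskijMap_iff (hlam : lam ≠ 0) {x : X} :
    IsFixedPt (krasnoselskijMap lam T) x ↔ IsFixedPt T x := by
  rw [IsFixedPt, IsFixedPt, ← sub_eq_zero, ← neg_eq_zero, neg_sub, sub_krasnoselskijMap,
    smul_eq_zero, or_iff_right hlam, sub_eq_zero, eq_comm]

end Module

theorem IsEnrichedKannanMap.isKannanMap_krasnoselskijMap [NormedAddCommGroup X]
    [NormedSpace ℝ X] {k a : ℝ} {T : X → X} (hT : IsEnrichedKannanMap k a T) (hk : 0 ≤ k) :
    IsKannanMap a (krasnoselskijMap (k + 1)⁻¹ T) := by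
  have hlam : (k + 1)⁻¹ * k = 1 - (k + 1)⁻¹ := by field_simp; ring
  have hpos : 0 ≤ (k + 1)⁻¹ := by positivity
  intro x y
  simp only [dist_eq_norm, sub_krasnoselskijMap, krasnoselskijMap_sub_krasnoselskijMap hlam,
    norm_smul, Real.norm_of_nonneg hpos]
  calc (k + 1)⁻¹ * ‖k • (x - y) + T x - T y‖ ≤ (k + 1)⁻¹ * (a * (‖x - T x‖ + ‖y - T y‖)) := by
        gcongr; exact hT x y
    _ = a * ((k + 1)⁻¹ * ‖x - T x‖ + (k + 1)⁻¹ * ‖y - T y‖) := by ring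

end Enriched

/-- **Corollary (Berinde–Păcurar).** Let `X` be a Banach space and `T : X → X`
a `(k,a)`-enriched Kannan mapping: `a ∈ [0,1/2)`, `k ≥ 0` and
`‖k(x−y) + Tx − Ty‖ ≤ a(‖x − Tx‖ + ‖y − Ty‖)` for all `x,y`. Then `T` has a
unique fixed point `p`; there exists `λ ∈ (0,1]` such that the Krasnoselskij
iteration converges to `p` for every `x₀`, with the a priori estimate for
`δ = a/(1−a)`. -/
theorem enriched_kannan_fixed_point
    {X : Type*} [NormedAddCommGroup X] [NormedSpace ℝ X] [CompleteSpace X]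
    (T : X → X) (k a : ℝ) (hk : 0 ≤ k) (ha : a ∈ Set.Ico (0 : ℝ) (1 / 2))
    (hT : ∀ x y : X, ‖k • (x - y) + T x - T y‖ ≤ a * (‖x - T x‖ + ‖y - T y‖)) :
    ∃ p : X, T p = p ∧ (∀ q : X, T q = q → q = p) ∧
      ∃ lam ∈ Set.Ioc (0 : ℝ) 1,
        ∀ x₀ : X,
          Filter.Tendsto (fun n => (fun z => (1 - lam) • z + lam • T z)^[n] x₀)
            Filter.atTop (nhds p) ∧
          ∀ n : ℕ, ‖(fun z => (1 - lam) • z + lam • T z)^[n] x₀ - p‖ ≤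
            (a / (1 - a)) ^ n / (1 - a / (1 - a)) *
              ‖x₀ - ((1 - lam) • x₀ + lam • T x₀)‖ := by
  have hlam : (k + 1)⁻¹ ∈ Set.Ioc (0 : ℝ) 1 := ⟨by positivity, inv_le_one_of_one_le₀ (by linarith)⟩
  have hK : IsKannanMap a (krasnoselskijMap (k + 1)⁻¹ T) :=
    IsEnrichedKannanMap.isKannanMap_krasnoselskijMap hT hk
  have hfix {x : X} := isFixedPt_krasnoselskijMap_iff (T := T) (x := x) hlam.1.ne'
  obtain ⟨p, hp, horbit⟩ := hK.exists_isFixedPt_tendsto_iterate ha.1 ha.2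
  refine ⟨p, hfix.mp hp, fun q hq => hK.eq_of_isFixedPt (hfix.mpr hq) hp, _, hlam, fun x₀ => ?_⟩
  obtain ⟨htendsto, hest⟩ := horbit x₀
  refine ⟨htendsto, fun n => ?_⟩
  rw [← dist_eq_norm, ← dist_eq_norm]
  exact hest n
end

section
/- Let T : [0,4/3] → [0,4/3] be defined by Tx = 1 − x if x ∈ [0,2/3) and Tx = 2 − x if x ∈ [2/3,4/3]. Then for every θ ∈ (0,2), T is a (1,θ,3)-enriched almost contraction, i.e. |(x−y) + Tx − Ty| ≤ θ|x−y| + 3|(x−y) + Tx − y| for all x,y ∈ [0,4/3]. -/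
/-!
With `b = 1` everything is governed by `S x = x + T x`, which is the step function equal to `1`
on `[0, 2/3)` and `2` on `[2/3, 4/3]`: the left-hand side is `|S x - S y|` and the `L`-term is
`3 |S x - 2 y|`. The left-hand side vanishes unless `x` and `y` lie on different steps, and then
it is `1`, while `2 y` is at least `1/3` away from `S x`.
-/

open Set

section StepMap

variable {T : ℝ → ℝ}

lemma add_apply_eq_one (hT1 : ∀ x ∈ Ico (0 : ℝ) (2 / 3), T x = 1 - x) {x : ℝ}
    (hx : x ∈ Ico (0 : ℝ) (2 / 3)) : x + T x = 1 := by
  rw [hT1 x hx]; ring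

lemma add_apply_eq_two (hT2 : ∀ x ∈ Icc (2 / 3 : ℝ) (4 / 3), T x = 2 - x) {x : ℝ}
    (hx : x ∈ Icc (2 / 3 : ℝ) (4 / 3)) : x + T x = 2 := by
  rw [hT2 x hx]; ring

lemma abs_add_apply_sub_le (hT1 : ∀ x ∈ Ico (0 : ℝ) (2 / 3), T x = 1 - x)
    (hT2 : ∀ x ∈ Icc (2 / 3 : ℝ) (4 / 3), T x = 2 - x) {x y : ℝ}
    (hx : x ∈ Icc (0 : ℝ) (4 / 3)) (hy : y ∈ Icc (0 : ℝ) (4 / 3)) :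
    |x + T x - (y + T y)| ≤ 3 * |x + T x - 2 * y| := by
  obtain ⟨hx0, hx1⟩ := hx
  obtain ⟨hy0, hy1⟩ := hy
  rcases lt_or_ge x (2 / 3) with hx | hx <;> rcases lt_or_ge y (2 / 3) with hy | hy
  · rw [add_apply_eq_one hT1 ⟨hx0, hx⟩, add_apply_eq_one hT1 ⟨hy0, hy⟩, sub_self, abs_zero]
    positivity
  · rw [add_apply_eq_one hT1 ⟨hx0, hx⟩, add_apply_eq_two hT2 ⟨hy, hy1⟩,
      abs_of_neg (by norm_num : (1 - 2 : ℝ) < 0), abs_of_nonpos (by linarith : 1 - 2 * y ≤ 0)]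
    linarith
  · rw [add_apply_eq_two hT2 ⟨hx, hx1⟩, add_apply_eq_one hT1 ⟨hy0, hy⟩,
      abs_of_pos (by norm_num : (0 : ℝ) < 2 - 1), abs_of_pos (by linarith : 0 < 2 - 2 * y)]
    linarith
  · rw [add_apply_eq_two hT2 ⟨hx, hx1⟩, add_apply_eq_two hT2 ⟨hy, hy1⟩, sub_self, abs_zero]
    positivity

end StepMap

/-- **Example.** The map `T : [0,4/3] → [0,4/3]` defined by `Tx = 1 − x` on
`[0,2/3)` and `Tx = 2 − x` on `[2/3,4/3]` is a `(1,θ,3)`-enriched almost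
contraction for every `θ ∈ (0,2)`. -/
theorem example_is_enriched_almost_contraction
    (T : ℝ → ℝ)
    (hT1 : ∀ x ∈ Set.Ico (0 : ℝ) (2 / 3), T x = 1 - x)
    (hT2 : ∀ x ∈ Set.Icc (2 / 3 : ℝ) (4 / 3), T x = 2 - x) :
    ∀ θ ∈ Set.Ioo (0 : ℝ) 2, ∀ x ∈ Set.Icc (0 : ℝ) (4 / 3),
      ∀ y ∈ Set.Icc (0 : ℝ) (4 / 3),
        |(x - y) + T x - T y| ≤ θ * |x - y| + 3 * |(x - y) + T x - y| := by
  rintro θ ⟨hθ, -⟩ x hx y hy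
  calc |(x - y) + T x - T y| = |x + T x - (y + T y)| := by ring_nf
    _ ≤ 3 * |x + T x - 2 * y| := abs_add_apply_sub_le hT1 hT2 hx hy
    _ = 3 * |(x - y) + T x - y| := by ring_nf
    _ ≤ θ * |x - y| + 3 * |(x - y) + T x - y| :=
      le_add_of_nonneg_left (mul_nonneg hθ.le (abs_nonneg _))
end

section
/- Let T : [0,4/3] → [0,4/3] be defined by Tx = 1 − x if x ∈ [0,2/3) and Tx = 2 − x if x ∈ [2/3,4/3]. Then T is not an almost contraction: there are no constants δ ∈ (0,1) and L ≥ 0 such that |Tx − Ty| ≤ δ|x−y| + L|y − Tx| for all x,y ∈ [0,4/3]. (In fact, the inequality already fails at x = 7/15, y = 8/15 for every δ ∈ (0,1) and L ≥ 0.) -/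
theorem not_dist_le_of_apply_eq_of_apply_eq {X : Type*} [MetricSpace X] {T : X → X} {x y : X}
    (hxy : x ≠ y) (hx : T x = y) (hy : T y = x) {δ : ℝ} (hδ : δ < 1) (L : ℝ) :
    ¬ dist (T x) (T y) ≤ δ * dist x y + L * dist y (T x) := by
  rw [hx, hy, dist_self, mul_zero, add_zero, dist_comm, not_le]
  exact mul_lt_of_lt_one_left (dist_pos.2 hxy) hδ

theorem example_not_almost_contraction_general
    (T : ℝ → ℝ)
    (hT1 : ∀ x ∈ Set.Ico (0 : ℝ) (2 / 3), T x = 1 - x) :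
    (¬ ∃ δ ∈ Set.Ioo (0 : ℝ) 1, ∃ L : ℝ, 0 ≤ L ∧
      ∀ x ∈ Set.Icc (0 : ℝ) (4 / 3), ∀ y ∈ Set.Icc (0 : ℝ) (4 / 3),
        |T x - T y| ≤ δ * |x - y| + L * |y - T x|) ∧
    (∀ δ ∈ Set.Ioo (0 : ℝ) 1, ∀ L : ℝ, 0 ≤ L →
      ¬ |T (7 / 15) - T (8 / 15)| ≤
          δ * |(7 / 15 : ℝ) - 8 / 15| + L * |(8 / 15 : ℝ) - T (7 / 15)|) := by
  have h7 : T (7 / 15) = 8 / 15 := by rw [hT1 _ ⟨by norm_num, by norm_num⟩]; norm_num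
  have h8 : T (8 / 15) = 7 / 15 := by rw [hT1 _ ⟨by norm_num, by norm_num⟩]; norm_num
  have fails_at_swap : ∀ δ ∈ Set.Ioo (0 : ℝ) 1, ∀ L : ℝ, 0 ≤ L →
      ¬ |T (7 / 15) - T (8 / 15)| ≤
          δ * |(7 / 15 : ℝ) - 8 / 15| + L * |(8 / 15 : ℝ) - T (7 / 15)| := by
    intro δ hδ L _
    simpa only [Real.dist_eq] using
      not_dist_le_of_apply_eq_of_apply_eq (by norm_num) h7 h8 hδ.2 L
  refine ⟨?_, fails_at_swap⟩
  rintro ⟨δ, hδ, L, hL, h⟩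
  exact fails_at_swap δ hδ L hL (h _ ⟨by norm_num, by norm_num⟩ _ ⟨by norm_num, by norm_num⟩)

/-- **Example.** The map `T : [0,4/3] → [0,4/3]` defined by `Tx = 1 − x` on
`[0,2/3)` and `Tx = 2 − x` on `[2/3,4/3]` is not an almost contraction: for
every `δ ∈ (0,1)` and `L ≥ 0` the almost contraction inequality fails; in fact
it already fails at `x = 7/15`, `y = 8/15`. -/
theorem example_not_almost_contraction
    (T : ℝ → ℝ)
    (hT1 : ∀ x ∈ Set.Ico (0 : ℝ) (2 / 3), T x = 1 - x)
    (hT2 : ∀ x ∈ Set.Icc (2 / 3 : ℝ) (4 / 3), T x = 2 - x) :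
    (¬ ∃ δ ∈ Set.Ioo (0 : ℝ) 1, ∃ L : ℝ, 0 ≤ L ∧
      ∀ x ∈ Set.Icc (0 : ℝ) (4 / 3), ∀ y ∈ Set.Icc (0 : ℝ) (4 / 3),
        |T x - T y| ≤ δ * |x - y| + L * |y - T x|) ∧
    (∀ δ ∈ Set.Ioo (0 : ℝ) 1, ∀ L : ℝ, 0 ≤ L →
      ¬ |T (7 / 15) - T (8 / 15)| ≤
          δ * |(7 / 15 : ℝ) - 8 / 15| + L * |(8 / 15 : ℝ) - T (7 / 15)|) :=
  example_not_almost_contraction_general T hT1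
end

section
/- Let T : [0,4/3] → [0,4/3] be defined by Tx = 1 − x if x ∈ [0,2/3) and Tx = 2 − x if x ∈ [2/3,4/3]. Then T is not an enriched nonexpansive mapping: there is no b ∈ [0,∞) such that |b(x−y) + Tx − Ty| ≤ (b+1)|x−y| for all x,y ∈ [0,4/3]. (In fact, for every b ≥ 0 the inequality fails at x = 2/3, y = 1/2.) -/
/-! The jump of `T` at `2/3` makes `T x - T y = 5/6` exceed `x - y = 1/6` for `x = 2/3`,
`y = 1/2`, and whenever `0 ≤ x - y < T x - T y`, the quantity `b (x - y) + T x - T y` exceeds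
`(b + 1) (x - y)` for every `b`. -/

theorem not_abs_mul_add_le_of_lt (b : ℝ) {d t : ℝ} (hd : 0 ≤ d) (hdt : d < t) :
    ¬ |b * d + t| ≤ (b + 1) * |d| := by
  rw [abs_of_nonneg hd, not_le]
  calc (b + 1) * d = b * d + d := by ring
    _ < b * d + t := by linarith
    _ ≤ |b * d + t| := le_abs_self _

/-- **Example.** The map `T : [0,4/3] → [0,4/3]` defined by `Tx = 1 − x` on
`[0,2/3)` and `Tx = 2 − x` on `[2/3,4/3]` is not an enriched nonexpansive
mapping: for every `b ≥ 0` the enriched nonexpansiveness inequality fails at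
`x = 2/3`, `y = 1/2`. -/
theorem example_not_enriched_nonexpansive
    (T : ℝ → ℝ)
    (hT1 : ∀ x ∈ Set.Ico (0 : ℝ) (2 / 3), T x = 1 - x)
    (hT2 : ∀ x ∈ Set.Icc (2 / 3 : ℝ) (4 / 3), T x = 2 - x) :
    (¬ ∃ b : ℝ, 0 ≤ b ∧
      ∀ x ∈ Set.Icc (0 : ℝ) (4 / 3), ∀ y ∈ Set.Icc (0 : ℝ) (4 / 3),
        |b * (x - y) + T x - T y| ≤ (b + 1) * |x - y|) ∧
    (∀ b : ℝ, 0 ≤ b →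
      ¬ |b * ((2 / 3 : ℝ) - 1 / 2) + T (2 / 3) - T (1 / 2)| ≤
          (b + 1) * |(2 / 3 : ℝ) - 1 / 2|) := by
  have hx : T (2 / 3) = 4 / 3 := by
    rw [hT2 _ ⟨le_rfl, by norm_num⟩]; norm_num
  have hy : T (1 / 2) = 1 / 2 := by
    rw [hT1 _ ⟨by norm_num, by norm_num⟩]; norm_num
  have fails : ∀ b : ℝ, 0 ≤ b →
      ¬ |b * ((2 / 3 : ℝ) - 1 / 2) + T (2 / 3) - T (1 / 2)| ≤
          (b + 1) * |(2 / 3 : ℝ) - 1 / 2| := by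
    intro b _
    rw [add_sub_assoc, hx, hy]
    exact not_abs_mul_add_le_of_lt b (by norm_num) (by norm_num)
  refine ⟨fun ⟨b, hb, h⟩ => fails b hb ?_, fails⟩
  exact h _ ⟨by norm_num, by norm_num⟩ _ ⟨by norm_num, by norm_num⟩
end
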